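/- Let σ : ℝ → (0,∞) be C¹ with σ' ≥ 0, and let w ∈ C¹(ℝ) be such that σ w² → 0 as x → ±∞ and the integrals ∫ σ w², ∫ σ (w')² are finite. Then sup_{x∈ℝ} σ(x) w(x)² ≤ 2 (∫_ℝ σ w²)^{1/2} (∫_ℝ σ (w')²)^{1/2}. -/

import Mathlib

/-!
Since `σ' ≥ 0`, for every `t > 0` the derivative of `σ w²` is bounded below by
`2 σ w w' ≥ -(t σ w² + t⁻¹ σ w'²)`. Integrating from `x` to `+∞`, where `σ w² → 0`, gives
`σ(x) w(x)² ≤ t A + t⁻¹ B` with `A = ∫ σ w²` and `B = ∫ σ w'²`, and the infimum over `t`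
is `2 √A √B`.
-/

open MeasureTheory Filter Set Topology

theorem le_setIntegral_Ioi_of_neg_le_deriv {f f' g : ℝ → ℝ} {x : ℝ}
    (hf : ∀ y ∈ Ici x, HasDerivAt f (f' y) y) (hg : IntegrableOn g (Ioi x))
    (hfg : ∀ y ∈ Ioi x, -g y ≤ f' y) (hlim : Tendsto f atTop (𝓝 0)) :
    f x ≤ ∫ y in Ioi x, g y := by
  have hbound : ∀ T ∈ Ici x, f x ≤ f T + ∫ y in x..T, g y := by
    intro T hT
    have hFTC : ∫ y in x..T, -g y ≤ f T - f x :=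
      intervalIntegral.integral_le_sub_of_hasDeriv_right_of_le hT
        (fun y hy => (hf y hy.1).continuousAt.continuousWithinAt)
        (fun y hy => (hf y (mem_Ici.2 hy.1.le)).hasDerivWithinAt)
        ((integrableOn_Icc_iff_integrableOn_Ioc (by simp)).2
          (hg.neg.mono_set Ioc_subset_Ioi_self))
        fun y hy => hfg y hy.1
    rw [intervalIntegral.integral_neg] at hFTC
    linarith
  have hlim' : Tendsto (fun T => f T + ∫ y in x..T, g y) atTop (𝓝 (∫ y in Ioi x, g y)) := by
    simpa using hlim.add (intervalIntegral_tendsto_integral_Ioi x hg tendsto_id)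
  exact ge_of_tendsto hlim' (eventually_ge_atTop x |>.mono hbound)

theorem le_two_mul_sqrt_mul_sqrt_of_forall_le_mul_add_inv_mul {A B c : ℝ} (hA : 0 ≤ A)
    (hB : 0 ≤ B) (h : ∀ t > 0, c ≤ t * A + t⁻¹ * B) : c ≤ 2 * √A * √B := by
  set a := √A
  set b := √B
  have ha : 0 ≤ a := Real.sqrt_nonneg A
  have hb : 0 ≤ b := Real.sqrt_nonneg B
  -- `t = (b + ε) / (a + ε)` stands in for the minimiser `b / a`, which may not exist.
  have hclose : ∀ ε > 0, c ≤ 2 * a * b + ε * (a + b) := by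
    intro ε hε
    have hA' : (b + ε) / (a + ε) * A ≤ (b + ε) * a := by
      rw [← Real.sq_sqrt hA, div_mul_eq_mul_div, div_le_iff₀ (by positivity)]
      nlinarith [mul_nonneg (add_nonneg hb hε.le) (mul_nonneg ha hε.le)]
    have hB' : ((b + ε) / (a + ε))⁻¹ * B ≤ (a + ε) * b := by
      rw [inv_div, ← Real.sq_sqrt hB, div_mul_eq_mul_div, div_le_iff₀ (by positivity)]
      nlinarith [mul_nonneg (add_nonneg ha hε.le) (mul_nonneg hb hε.le)]
    calc c ≤ (b + ε) / (a + ε) * A + ((b + ε) / (a + ε))⁻¹ * B := h _ (by positivity)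
      _ ≤ (b + ε) * a + (a + ε) * b := add_le_add hA' hB'
      _ = 2 * a * b + ε * (a + b) := by ring
  have hlim : Tendsto (fun ε => 2 * a * b + ε * (a + b)) (𝓝[>] 0) (𝓝 (2 * a * b)) :=
    tendsto_nhdsWithin_of_tendsto_nhds <|
      (by fun_prop : Continuous fun ε : ℝ => 2 * a * b + ε * (a + b)).tendsto' 0 _ (by simp)
  exact ge_of_tendsto hlim (eventually_nhdsWithin_of_forall hclose)

theorem neg_mul_sq_add_inv_mul_sq_le {s s' a b t : ℝ} (hs : 0 ≤ s) (hs' : 0 ≤ s') (ht : 0 < t) :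
    -(t * (s * a ^ 2) + t⁻¹ * (s * b ^ 2)) ≤ s' * a ^ 2 + s * (2 * a * b) := by
  have := mul_le_mul_of_nonneg_left (two_mul_le_add_mul_sq (a := -a) (b := b) ht) hs
  nlinarith [mul_nonneg hs' (sq_nonneg a)]

theorem weighted_agmon_inequality_general (σ w : ℝ → ℝ)
    (hσ : ContDiff ℝ 1 σ) (hσpos : ∀ x, 0 < σ x)
    (hσ' : ∀ x, 0 ≤ deriv σ x) (hw : ContDiff ℝ 1 w)
    (hlimTop : Filter.Tendsto (fun x => σ x * w x ^ 2) Filter.atTop (nhds 0))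
    (hi1 : MeasureTheory.Integrable (fun x => σ x * w x ^ 2))
    (hi2 : MeasureTheory.Integrable (fun x => σ x * (deriv w x) ^ 2)) :
    ∀ x : ℝ, σ x * w x ^ 2 ≤
      2 * Real.sqrt (∫ y : ℝ, σ y * w y ^ 2) *
        Real.sqrt (∫ y : ℝ, σ y * (deriv w y) ^ 2) := by
  intro x
  have hσw : ∀ y, 0 ≤ σ y * w y ^ 2 := fun y => mul_nonneg (hσpos y).le (sq_nonneg _)
  have hσw' : ∀ y, 0 ≤ σ y * deriv w y ^ 2 := fun y => mul_nonneg (hσpos y).le (sq_nonneg _)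
  have hderiv : ∀ y, HasDerivAt (fun y => σ y * w y ^ 2)
      (deriv σ y * w y ^ 2 + σ y * (2 * w y * deriv w y)) y := fun y => by
    refine (((hσ.differentiable one_ne_zero y).hasDerivAt).mul
      (((hw.differentiable one_ne_zero y).hasDerivAt).fun_pow 2)).congr_deriv ?_
    push_cast
    ring
  refine le_two_mul_sqrt_mul_sqrt_of_forall_le_mul_add_inv_mul (integral_nonneg hσw)
    (integral_nonneg hσw') fun t ht => ?_
  have hint : Integrable fun y => t * (σ y * w y ^ 2) + t⁻¹ * (σ y * deriv w y ^ 2) :=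
    (hi1.const_mul t).add (hi2.const_mul t⁻¹)
  calc σ x * w x ^ 2
      ≤ ∫ y in Ioi x, (t * (σ y * w y ^ 2) + t⁻¹ * (σ y * deriv w y ^ 2)) :=
        le_setIntegral_Ioi_of_neg_le_deriv (fun y _ => hderiv y) hint.integrableOn
          (fun y _ => neg_mul_sq_add_inv_mul_sq_le (hσpos y).le (hσ' y) ht) hlimTop
    _ ≤ ∫ y, (t * (σ y * w y ^ 2) + t⁻¹ * (σ y * deriv w y ^ 2)) :=
        setIntegral_le_integral hint <| .of_forall fun y =>
          add_nonneg (mul_nonneg ht.le (hσw y)) (mul_nonneg (inv_nonneg.2 ht.le) (hσw' y))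
    _ = t * (∫ y, σ y * w y ^ 2) + t⁻¹ * ∫ y, σ y * deriv w y ^ 2 := by
        rw [integral_add (hi1.const_mul t) (hi2.const_mul t⁻¹), integral_const_mul,
          integral_const_mul]

theorem weighted_agmon_inequality (σ w : ℝ → ℝ)
    (hσ : ContDiff ℝ 1 σ) (hσpos : ∀ x, 0 < σ x)
    (hσ' : ∀ x, 0 ≤ deriv σ x) (hw : ContDiff ℝ 1 w)
    (hlimTop : Filter.Tendsto (fun x => σ x * w x ^ 2) Filter.atTop (nhds 0))
    (hlimBot : Filter.Tendsto (fun x => σ x * w x ^ 2) Filter.atBot (nhds 0))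
    (hi1 : MeasureTheory.Integrable (fun x => σ x * w x ^ 2))
    (hi2 : MeasureTheory.Integrable (fun x => σ x * (deriv w x) ^ 2)) :
    ∀ x : ℝ, σ x * w x ^ 2 ≤
      2 * Real.sqrt (∫ y : ℝ, σ y * w y ^ 2) *
        Real.sqrt (∫ y : ℝ, σ y * (deriv w y) ^ 2) :=
  weighted_agmon_inequality_general σ w hσ hσpos hσ' hw hlimTop hi1 hi2
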